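/- Suppose the tuple ⟨Q̄¹, Q̄², π̄¹, π̄²⟩ satisfies the partial-information equations: for i = 1,2 and all s, a, Q̄ⁱ(s,a) = r̄ⁱ(s,a) + γᵢ ∑_{s'} (π̄ⁱ(s')·Q̄ⁱ(s')) p̄ⁱ(s'|s,a), where the marginal rewards and transitions are averages of the full reward rⁱ and transition p over the opponent's strategy π̄ʲ, and where π̄ⁱ(s) maximizes π ↦ π·Q̄ⁱ(s) over probability vectors on Aⁱ. Then there exist full-information Q-functions Q̃¹, Q̃² with Q̃ⁱ(s,a¹,a²) = rⁱ(s,a¹,a²) + γᵢ ∑_{s'} π̄¹(s')π̄²(s')Q̃ⁱ(s') p(s'|s,a¹,a²), Q̄ⁱ(s) equals Q̃ⁱ(s) averaged over the opponent strategy π̄ʲ(s), and (π̄¹, π̄²) is a mixed-strategy Nash equilibrium of the matrices (Q̃¹(s), Q̃²(s)) at every state s: π̄¹π̄²Q̃¹(s) ≥ π¹π̄²Q̃¹(s) for all π¹ ∈ P(A¹), and π̄¹π̄²Q̃²(s) ≥ π̄¹π²Q̃²(s) for all π² ∈ P(A²). -/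

import Mathlib

/-- `π` is a probability vector on `A`. -/
def IsProbVec {A : Type*} [Fintype A] (π : A → ℝ) : Prop :=
  (∀ a, 0 ≤ π a) ∧ ∑ a, π a = 1

/-- Proposition 1: a solution of the partial-information equations yields
full-information Q-functions for which the partial-information strategies form
a mixed-strategy Nash equilibrium at every state. -/
theorem stmt_8 {S A1 A2 : Type*} [Fintype S] [Fintype A1] [Fintype A2]
    [Nonempty S] [Nonempty A1] [Nonempty A2]
    (γ1 γ2 : ℝ) (hγ1 : γ1 ∈ Set.Ico (0 : ℝ) 1) (hγ2 : γ2 ∈ Set.Ico (0 : ℝ) 1)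
    (r1 r2 : S → A1 → A2 → ℝ)
    (p : S → A1 → A2 → S → ℝ) (hp : ∀ s a1 a2, IsProbVec (p s a1 a2))
    (π1 : S → A1 → ℝ) (π2 : S → A2 → ℝ)
    (hπ1 : ∀ s, IsProbVec (π1 s)) (hπ2 : ∀ s, IsProbVec (π2 s))
    (Qb1 : S → A1 → ℝ) (Qb2 : S → A2 → ℝ)
    -- partial-information Q-function equations with marginal rewards/transitions
    (hQb1 : ∀ s a, Qb1 s a = (∑ a', r1 s a a' * π2 s a') +
      γ1 * ∑ s', (∑ b, π1 s' b * Qb1 s' b) * (∑ a', p s a a' s' * π2 s a'))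
    (hQb2 : ∀ s a, Qb2 s a = (∑ a', r2 s a' a * π1 s a') +
      γ2 * ∑ s', (∑ b, π2 s' b * Qb2 s' b) * (∑ a', p s a' a s' * π1 s a'))
    -- each player's strategy maximizes its own marginal Q-function
    (hopt1 : ∀ s, ∀ π : A1 → ℝ, IsProbVec π →
      ∑ a, π a * Qb1 s a ≤ ∑ a, π1 s a * Qb1 s a)
    (hopt2 : ∀ s, ∀ π : A2 → ℝ, IsProbVec π →
      ∑ a, π a * Qb2 s a ≤ ∑ a, π2 s a * Qb2 s a) :
    ∃ Qt1 Qt2 : S → A1 → A2 → ℝ,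
      -- full-information Q-function equations under strategies (π1, π2)
      (∀ s a1 a2, Qt1 s a1 a2 = r1 s a1 a2 +
        γ1 * ∑ s', (∑ b1, ∑ b2, π1 s' b1 * π2 s' b2 * Qt1 s' b1 b2) * p s a1 a2 s') ∧
      (∀ s a1 a2, Qt2 s a1 a2 = r2 s a1 a2 +
        γ2 * ∑ s', (∑ b1, ∑ b2, π1 s' b1 * π2 s' b2 * Qt2 s' b1 b2) * p s a1 a2 s') ∧
      -- marginal Q-functions are opponent-averages of the full Q-functions
      (∀ s a, Qb1 s a = ∑ b, Qt1 s a b * π2 s b) ∧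
      (∀ s b, Qb2 s b = ∑ a, Qt2 s a b * π1 s a) ∧
      -- (π1, π2) is a mixed-strategy Nash equilibrium of (Qt1(s), Qt2(s))
      (∀ s, ∀ π : A1 → ℝ, IsProbVec π →
        ∑ a, ∑ b, π a * π2 s b * Qt1 s a b ≤ ∑ a, ∑ b, π1 s a * π2 s b * Qt1 s a b) ∧
      (∀ s, ∀ π : A2 → ℝ, IsProbVec π →
        ∑ a, ∑ b, π1 s a * π b * Qt2 s a b ≤ ∑ a, ∑ b, π1 s a * π2 s b * Qt2 s a b) := by
  classical
  set V1 : S → ℝ := fun s => ∑ b, π1 s b * Qb1 s b with hV1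
  set V2 : S → ℝ := fun s => ∑ b, π2 s b * Qb2 s b with hV2
  set Qt1 : S → A1 → A2 → ℝ :=
    fun s a1 a2 => r1 s a1 a2 + γ1 * ∑ s', V1 s' * p s a1 a2 s' with hQt1
  set Qt2 : S → A1 → A2 → ℝ :=
    fun s a1 a2 => r2 s a1 a2 + γ2 * ∑ s', V2 s' * p s a1 a2 s' with hQt2
  -- marginal identities
  have hm1 : ∀ s a, Qb1 s a = ∑ b, Qt1 s a b * π2 s b := by
    intro s a
    rw [hQb1 s a]
    simp only [hQt1, add_mul, Finset.sum_add_distrib]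
    congr 1
    simp only [Finset.mul_sum, Finset.sum_mul]
    rw [Finset.sum_comm]
    refine Finset.sum_congr rfl fun s' _ => Finset.sum_congr rfl fun b _ => ?_
    simp only [hV1, Finset.mul_sum, Finset.sum_mul]
    exact Finset.sum_congr rfl fun x _ => by ring
  have hm2 : ∀ s b, Qb2 s b = ∑ a, Qt2 s a b * π1 s a := by
    intro s a
    rw [hQb2 s a]
    simp only [hQt2, add_mul, Finset.sum_add_distrib]
    congr 1
    simp only [Finset.mul_sum, Finset.sum_mul]
    rw [Finset.sum_comm]
    refine Finset.sum_congr rfl fun s' _ => Finset.sum_congr rfl fun b _ => ?_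
    simp only [hV2, Finset.mul_sum, Finset.sum_mul]
    exact Finset.sum_congr rfl fun x _ => by ring
  -- the double sums against arbitrary first-player strategies
  have key1 : ∀ s (π : A1 → ℝ),
      ∑ a, ∑ b, π a * π2 s b * Qt1 s a b = ∑ a, π a * Qb1 s a := by
    intro s π
    refine Finset.sum_congr rfl fun a _ => ?_
    rw [hm1 s a, Finset.mul_sum]
    exact Finset.sum_congr rfl fun b _ => by ring
  have key2 : ∀ s (π : A2 → ℝ),
      ∑ a, ∑ b, π1 s a * π b * Qt2 s a b = ∑ b, π b * Qb2 s b := by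
    intro s π
    rw [Finset.sum_comm]
    refine Finset.sum_congr rfl fun b _ => ?_
    rw [hm2 s b, Finset.mul_sum]
    exact Finset.sum_congr rfl fun a _ => by ring
  -- the double sum under (π1, π2) equals the value function
  have hv1 : ∀ s, ∑ b1, ∑ b2, π1 s b1 * π2 s b2 * Qt1 s b1 b2 = V1 s := by
    intro s
    rw [key1 s (π1 s), hV1]
  have hv2 : ∀ s, ∑ b1, ∑ b2, π1 s b1 * π2 s b2 * Qt2 s b1 b2 = V2 s := by
    intro s
    rw [key2 s (π2 s), hV2]
  refine ⟨Qt1, Qt2, ?_, ?_, hm1, hm2, ?_, ?_⟩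
  · intro s a1 a2
    simp only [hv1]
    rfl
  · intro s a1 a2
    simp only [hv2]
    rfl
  · intro s π hπ
    rw [key1 s π, key1 s (π1 s)]
    exact hopt1 s π hπ
  · intro s π hπ
    rw [key2 s π, key2 s (π2 s)]
    exact hopt2 s π hπ
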